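/- arXiv:2012.03564 — 3 statements merged into one kernel-verified Lean document; each statement's English description precedes it below -/
import Mathlib

section
/- Let A be a unital C*-algebra, μ and ν states on A with ν faithful, and E : A → A a unital completely positive map with ν ∘ E = μ. Suppose k₁,…,kₙ ∈ A satisfy, for every l, μ(kₗ*kₗ) + ν(kₗ*kₗ) - ν(E(kₗ)*kₗ) - ν(kₗ*E(kₗ)) = 0. Then E(kₗ) = kₗ and E(kₗ*kₗ) = E(kₗ)*E(kₗ) for all l. -/
open scoped ComplexOrder InnerProductSpace

/-- A state on a unital complex star algebra: unital positive linear functional. -/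
def IsState {A : Type*} [Ring A] [StarRing A] [Algebra ℂ A] (φ : A →ₗ[ℂ] ℂ) : Prop :=
  φ 1 = 1 ∧ ∀ a : A, 0 ≤ φ (star a * a)

/-- Complete positivity of a linear map between star algebras, with the order on the
codomain given by a `StarOrderedRing` structure. -/
def IsCPMap {A B : Type*} [Ring A] [StarRing A] [Algebra ℂ A]
    [Ring B] [StarRing B] [Algebra ℂ B] [PartialOrder B]
    (E : A →ₗ[ℂ] B) : Prop :=
  ∀ (m : ℕ) (a : Fin m → A) (b : Fin m → B),
    0 ≤ ∑ i, ∑ j, star (b i) * E (star (a i) * a j) * b j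

/-- vanishing transport cost terms force `E(kₗ) = kₗ` and equality in
Kadison–Schwarz, for `ν` faithful. -/
theorem stmt_3 {A : Type*} [CStarAlgebra A] [PartialOrder A] [StarOrderedRing A]
    (μ ν : A →ₗ[ℂ] ℂ) (hμ : IsState μ) (hν : IsState ν)
    (hfaith : ∀ a : A, ν (star a * a) = 0 → a = 0)
    (E : A →ₗ[ℂ] A) (hE1 : E 1 = 1) (hcp : IsCPMap E)
    (hνE : ∀ a : A, ν (E a) = μ a)
    (n : ℕ) (k : Fin n → A)
    (h : ∀ l : Fin n,
      μ (star (k l) * k l) + ν (star (k l) * k l)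
        - ν (star (E (k l)) * k l) - ν (star (k l) * E (k l)) = 0) :
    ∀ l : Fin n, E (k l) = k l ∧ E (star (k l) * k l) = star (E (k l)) * E (k l) := by
  -- E is positive
  have hpos : ∀ a : A, 0 ≤ E (star a * a) := by
    intro a
    have := hcp 1 ![a] ![1]
    simpa using this
  have hsqrt : ∀ x : A, 0 ≤ x → star (CFC.sqrt x) * CFC.sqrt x = x := by
    intro x hx
    rw [(IsSelfAdjoint.of_nonneg (CFC.sqrt_nonneg (a := x))).star_eq,
      CFC.sqrt_mul_sqrt_self x hx]
  have hpos' : ∀ x : A, 0 ≤ x → 0 ≤ E x := by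
    intro x hx
    rw [← hsqrt x hx]; exact hpos _
  -- E preserves selfadjointness
  have hsa : ∀ x : A, IsSelfAdjoint x → IsSelfAdjoint (E x) := by
    intro x hx
    have hp : (0 : A) ≤ x + algebraMap ℝ A ‖x‖ := by
      have h1 := hx.neg_algebraMap_norm_le_self
      have := sub_nonneg.mpr h1
      rwa [sub_neg_eq_add] at this
    have hq : (0 : A) ≤ algebraMap ℝ A ‖x‖ - x := sub_nonneg.mpr hx.le_algebraMap_norm_self
    have hxeq : (2 : ℂ)⁻¹ • ((x + algebraMap ℝ A ‖x‖) - (algebraMap ℝ A ‖x‖ - x)) = x := by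
      rw [show (x + algebraMap ℝ A ‖x‖) - (algebraMap ℝ A ‖x‖ - x) = (2 : ℂ) • x by
        rw [two_smul]; abel, smul_smul]
      norm_num
    have hEp := (IsSelfAdjoint.of_nonneg (hpos' _ hp))
    have hEq := (IsSelfAdjoint.of_nonneg (hpos' _ hq))
    rw [← hxeq, map_smul, map_sub]
    show star _ = _
    rw [star_smul, star_sub, hEp.star_eq, hEq.star_eq]
    congr 1
    simp
  -- E is star-preserving
  have hstar : ∀ a : A, E (star a) = star (E a) := by
    intro a
    have hu : IsSelfAdjoint (a + star a) := by
      show star _ = _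
      rw [star_add, star_star]; abel
    have hv : IsSelfAdjoint (Complex.I • (a - star a)) := by
      show star _ = _
      rw [star_smul, star_sub, star_star, show star Complex.I = -Complex.I by simp,
        show star a - a = -(a - star a) by abel, smul_neg, neg_smul, neg_neg]
    have h1 : (2:ℂ)⁻¹ • (a + star a) + (-Complex.I * 2⁻¹) • (Complex.I • (a - star a)) = a := by
      rw [smul_smul, show -Complex.I * 2⁻¹ * Complex.I = 2⁻¹ by
        simp [mul_comm, ← mul_assoc], ← smul_add,
        show a + star a + (a - star a) = (2:ℂ) • a by rw [two_smul]; abel, smul_smul]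
      norm_num
    have h2 : (2:ℂ)⁻¹ • (a + star a) - (-Complex.I * 2⁻¹) • (Complex.I • (a - star a))
        = star a := by
      rw [smul_smul, show -Complex.I * 2⁻¹ * Complex.I = 2⁻¹ by
        simp [mul_comm, ← mul_assoc], ← smul_sub,
        show a + star a - (a - star a) = (2:ℂ) • star a by rw [two_smul]; abel, smul_smul]
      norm_num
    have hEu := hsa _ hu
    have hEv := hsa _ hv
    have eL := (congrArg E h2).symm
    have eR := (congrArg E h1).symm
    rw [map_sub, map_smul, map_smul] at eL
    rw [map_add, map_smul, map_smul] at eR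
    rw [eL, eR, star_add, star_smul, star_smul, hEu.star_eq, hEv.star_eq,
      show star ((2:ℂ)⁻¹) = (2:ℂ)⁻¹ by simp,
      show star (-Complex.I * 2⁻¹) = -(-Complex.I * 2⁻¹) by simp, neg_smul]
    abel
  -- Kadison–Schwarz
  have hKS : ∀ a : A, star (E a) * E a ≤ E (star a * a) := by
    intro a
    have := hcp 2 ![a, 1] ![1, -(E a)]
    simp only [Fin.sum_univ_two, Matrix.cons_val_zero, Matrix.cons_val_one, Matrix.head_cons,
      star_one, one_mul, mul_one, star_neg, star_mul, hE1, neg_mul, mul_neg, neg_neg,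
      star_one] at this
    rw [hstar a] at this
    rw [← sub_nonneg]
    convert this using 1
    abel
  -- positivity and faithfulness of ν on nonneg elements
  have hνpos : ∀ x : A, 0 ≤ x → 0 ≤ ν x := by
    intro x hx
    have h1 := hsqrt x hx
    rw [← h1]; exact hν.2 _
  have hνfaith : ∀ x : A, 0 ≤ x → ν x = 0 → x = 0 := by
    intro x hx hx0
    have h1 := hsqrt x hx
    have := hfaith (CFC.sqrt x) (by rw [h1]; exact hx0)
    rw [← h1, this]
    simp
  intro l
  set a : A := k l with ha
  set b : A := E a with hb
  have hexp : star (a - b) * (a - b) = star a * a - star b * a - star a * b + star b * b := by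
    rw [star_sub]
    noncomm_ring
  have key : ν (star (a - b) * (a - b)) + ν (E (star a * a) - star b * b) = 0 := by
    rw [hexp, map_sub, hνE]
    have hl := h l
    simp only [map_add, map_sub]
    linear_combination hl
  have h1 : 0 ≤ ν (star (a - b) * (a - b)) := hν.2 _
  have h2 : 0 ≤ ν (E (star a * a) - star b * b) := hνpos _ (sub_nonneg.mpr (hKS a))
  have e1 : ν (star (a - b) * (a - b)) = 0 := by
    refine le_antisymm ?_ h1
    have : ν (star (a - b) * (a - b)) = -ν (E (star a * a) - star b * b) := by
      linear_combination key
    rw [this]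
    exact neg_nonpos_of_nonneg h2
  have e2 : ν (E (star a * a) - star b * b) = 0 := by
    have := key
    rw [e1, zero_add] at this
    exact this
  have hab : a - b = 0 := hfaith _ e1
  have hEa : E (k l) = k l := by
    rw [← ha, ← hb, ← sub_eq_zero]
    rw [← neg_sub a b, hab, neg_zero]
  refine ⟨hEa, ?_⟩
  have hd : E (star a * a) - star b * b = 0 :=
    hνfaith _ (sub_nonneg.mpr (hKS a)) e2
  exact sub_eq_zero.mp hd
end

section
/- Let A be a unital C*-algebra, ν a faithful state on A, μ a state on A, and E : A → A a unital completely positive map with ν ∘ E = μ. Suppose k₁,…,kₙ ∈ A generate A as a C*-algebra, {k₁*,…,kₙ*} = {k₁,…,kₙ}, and for every l, ν(|kₗ - E(kₗ)|²) = 0 and ν(E(kₗ*kₗ) - E(kₗ)*E(kₗ)) = 0. Then E = id_A and μ = ν. -/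
open scoped ComplexOrder InnerProductSpace

section Aux
variable {A : Type*} [CStarAlgebra A] [PartialOrder A] [StarOrderedRing A]

lemma aux_exists_sq {a : A} (ha : 0 ≤ a) : ∃ c : A, a = star c * c :=
  ⟨CFC.sqrt a, by
    rw [(IsSelfAdjoint.of_nonneg (CFC.sqrt_nonneg a)).star_eq, CFC.sqrt_mul_sqrt_self a ha]⟩

lemma aux_smul_nonneg {x : A} (r : ℝ) (hr : 0 ≤ r) (hx : 0 ≤ x) : 0 ≤ r • x := by
  have h1 : r • x
      = star (algebraMap ℝ A (Real.sqrt r)) * x * algebraMap ℝ A (Real.sqrt r) := by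
    rw [(IsSelfAdjoint.algebraMap A (IsSelfAdjoint.all _)).star_eq, ← Algebra.commutes,
      ← Algebra.smul_def, ← Algebra.smul_def, smul_smul, Real.mul_self_sqrt hr]
  rw [h1]
  exact star_left_conjugate_nonneg hx _

lemma aux_key (c p : A) (hc : IsSelfAdjoint c) (hp : 0 ≤ p)
    (h : ∀ s : ℝ, 0 ≤ s • c + (s ^ 2) • p) : c = 0 := by
  clear hc
  have hp1 : p ≤ algebraMap ℝ A ‖p‖ :=
    IsSelfAdjoint.le_algebraMap_norm_self (.of_nonneg hp)
  have key : ∀ m : ℕ, ‖c‖ ≤ (2 * ‖p‖ + ‖p‖ * ‖(1 : A)‖) * (1 / ((m : ℝ) + 1)) := by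
    intro m
    set s : ℝ := ((m : ℝ) + 1)⁻¹ with hs
    have hs0 : 0 < s := by positivity
    have hcs : ∀ sign : ℝ, sign = 1 ∨ sign = -1 → 0 ≤ sign • c + s • p := by
      intro sign hsign
      have h0 := aux_smul_nonneg (x := (sign * s) • c + ((sign * s) ^ 2) • p)
        s⁻¹ (by positivity) (h (sign * s))
      rw [smul_add, smul_smul, smul_smul] at h0
      have e1 : s⁻¹ * (sign * s) = sign := by field_simp
      have e2 : s⁻¹ * (sign * s) ^ 2 = s := by
        rcases hsign with h' | h' <;> subst h' <;> field_simp <;> ring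
      rwa [e1, e2] at h0
    have hup : s • p ≤ algebraMap ℝ A (s * ‖p‖) := by
      have h0 := aux_smul_nonneg s hs0.le (sub_nonneg.mpr hp1)
      rw [smul_sub] at h0
      have e3 : s • algebraMap ℝ A ‖p‖ = algebraMap ℝ A (s * ‖p‖) := by
        rw [map_mul, ← Algebra.smul_def]
      rw [e3] at h0
      exact sub_nonneg.mp h0
    have h1 : 0 ≤ c + algebraMap ℝ A (s * ‖p‖) := by
      have := hcs 1 (Or.inl rfl)
      rw [one_smul] at this
      calc (0 : A) ≤ c + s • p := this
        _ ≤ c + algebraMap ℝ A (s * ‖p‖) := add_le_add_right hup _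
    have h2 : c + algebraMap ℝ A (s * ‖p‖) ≤ algebraMap ℝ A (2 * (s * ‖p‖)) := by
      have hcle : c ≤ s • p := by
        have := hcs (-1) (Or.inr rfl)
        rw [neg_smul, one_smul, neg_add_eq_sub] at this
        exact sub_nonneg.mp this
      calc c + algebraMap ℝ A (s * ‖p‖)
          ≤ algebraMap ℝ A (s * ‖p‖) + algebraMap ℝ A (s * ‖p‖) :=
            add_le_add_left (hcle.trans hup) _
        _ = algebraMap ℝ A (2 * (s * ‖p‖)) := by rw [two_mul, map_add]
    have h3 : ‖c + algebraMap ℝ A (s * ‖p‖)‖ ≤ 2 * (s * ‖p‖) :=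
      (CStarAlgebra.norm_le_iff_le_algebraMap _ (by positivity) h1).mpr h2
    have h4 : ‖algebraMap ℝ A (s * ‖p‖)‖ ≤ s * ‖p‖ * ‖(1 : A)‖ := by
      rw [Algebra.algebraMap_eq_smul_one, norm_smul, Real.norm_eq_abs,
        abs_of_nonneg (by positivity)]
    calc ‖c‖ = ‖(c + algebraMap ℝ A (s * ‖p‖)) - algebraMap ℝ A (s * ‖p‖)‖ := by
          rw [add_sub_cancel_right]
      _ ≤ ‖c + algebraMap ℝ A (s * ‖p‖)‖ + ‖algebraMap ℝ A (s * ‖p‖)‖ := norm_sub_le _ _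
      _ ≤ 2 * (s * ‖p‖) + s * ‖p‖ * ‖(1 : A)‖ := by linarith
      _ = (2 * ‖p‖ + ‖p‖ * ‖(1 : A)‖) * (1 / ((m : ℝ) + 1)) := by
          rw [hs]; field_simp
  have hlim : Filter.Tendsto (fun m : ℕ => (2 * ‖p‖ + ‖p‖ * ‖(1 : A)‖) * (1 / ((m : ℝ) + 1)))
      Filter.atTop (nhds 0) := by
    simpa using tendsto_one_div_add_atTop_nhds_zero_nat.const_mul (2 * ‖p‖ + ‖p‖ * ‖(1 : A)‖)
  have : ‖c‖ ≤ 0 := ge_of_tendsto' hlim key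
  exact norm_le_zero_iff.mp this

end Aux

/-- if the `kₗ` generate `A` as a C*-algebra, are closed under adjoints,
and the transport cost terms vanish, then `E = id` and `μ = ν`. -/
theorem stmt_4 {A : Type*} [CStarAlgebra A] [PartialOrder A] [StarOrderedRing A]
    (μ ν : A →ₗ[ℂ] ℂ) (hμ : IsState μ) (hν : IsState ν)
    (hfaith : ∀ a : A, ν (star a * a) = 0 → a = 0)
    (E : A →ₗ[ℂ] A) (hE1 : E 1 = 1) (hcp : IsCPMap E)
    (hνE : ∀ a : A, ν (E a) = μ a)
    (n : ℕ) (k : Fin n → A)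
    (hgen : (StarAlgebra.adjoin ℂ (Set.range k)).topologicalClosure = ⊤)
    (hstar : Set.range (fun l => star (k l)) = Set.range k)
    (h1 : ∀ l : Fin n, ν (star (k l - E (k l)) * (k l - E (k l))) = 0)
    (h2 : ∀ l : Fin n, ν (E (star (k l) * k l) - star (E (k l)) * E (k l)) = 0) :
    (∀ a : A, E a = a) ∧ μ = ν := by
  -- positivity of E
  have hpos : ∀ x : A, 0 ≤ x → 0 ≤ E x := by
    intro x hx
    obtain ⟨c, rfl⟩ := aux_exists_sq hx
    have h := hcp 1 ![c] ![1]
    simpa [Fin.sum_univ_one] using h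
  -- E fixes real scalars
  have hEalg : ∀ r : ℝ, E (algebraMap ℝ A r) = algebraMap ℝ A r := by
    intro r
    rw [Algebra.algebraMap_eq_smul_one, LinearMap.map_smul_of_tower, hE1]
  -- E preserves selfadjointness
  have hsa : ∀ x : A, IsSelfAdjoint x → IsSelfAdjoint (E x) := by
    intro x hx
    have h1' : 0 ≤ x + algebraMap ℝ A ‖x‖ := by
      have := hx.neg_algebraMap_norm_le_self
      rw [neg_le_iff_add_nonneg] at this
      simpa [add_comm] using this
    have hEx : E x = E (x + algebraMap ℝ A ‖x‖) - algebraMap ℝ A ‖x‖ := by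
      rw [map_add, hEalg, add_sub_cancel_right]
    rw [hEx]
    exact (IsSelfAdjoint.of_nonneg (hpos _ h1')).sub
      (IsSelfAdjoint.algebraMap A (IsSelfAdjoint.all _))
  -- E is star-preserving
  have hstarE : ∀ x : A, E (star x) = star (E x) := by
    intro x
    have hre : IsSelfAdjoint ((realPart x : A)) := (realPart x).2
    have him : IsSelfAdjoint ((imaginaryPart x : A)) := (imaginaryPart x).2
    conv_lhs => rw [← realPart_add_I_smul_imaginaryPart x]
    conv_rhs => rw [← realPart_add_I_smul_imaginaryPart x]
    rw [star_add, star_smul, map_add, map_smul, map_add, map_smul,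
      star_add, star_smul, hre.star_eq, him.star_eq, Complex.star_def, Complex.conj_I,
      (hsa _ hre).star_eq, (hsa _ him).star_eq]
  -- Kadison-Schwarz from complete positivity
  have hKS : ∀ x : A, 0 ≤ E (star x * x) - star (E x) * E x := by
    intro x
    have h := hcp 2 ![x, 1] ![1, -(E x)]
    simp only [Fin.sum_univ_two, Matrix.cons_val_zero, Matrix.cons_val_one, Matrix.head_cons] at h
    convert h using 1
    simp only [mul_one, one_mul, star_one, star_neg, hE1, hstarE, mul_neg, neg_mul, neg_neg]
    abel
  -- quadratic expansion
  have expand : ∀ (a b : A) (t : ℂ),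
      E (star (a + t • b) * (a + t • b)) - star (E (a + t • b)) * E (a + t • b)
      = (E (star a * a) - star (E a) * E a)
        + t • (E (star a * b) - star (E a) * E b)
        + star t • (E (star b * a) - star (E b) * E a)
        + (star t * t) • (E (star b * b) - star (E b) * E b) := by
    intro a b t
    simp only [star_add, star_smul, add_mul, mul_add, smul_mul_assoc, mul_smul_comm, smul_smul,
      map_add, map_smul, smul_sub]
    module
  -- Cauchy-Schwarz / multiplicative domain
  have hCS : ∀ a b : A, E (star a * a) = star (E a) * E a →
      E (star a * b) = star (E a) * E b := by
    intro a b hB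
    set Bab := E (star a * b) - star (E a) * E b with hBab
    set p := E (star b * b) - star (E b) * E b with hpdef
    have hp : 0 ≤ p := hKS b
    have hstarBab : star Bab = E (star b * a) - star (E b) * E a := by
      have h1' : star (E (star a * b)) = E (star b * a) := by
        rw [← hstarE, star_mul, star_star]
      have h2' : star (star (E a) * E b) = star (E b) * E a := by
        rw [star_mul, star_star]
      rw [hBab, star_sub, h1', h2']
    have hq : ∀ t : ℂ, 0 ≤ t • Bab + star t • star Bab + (star t * t) • p := by
      intro t
      have h := hKS (a + t • b)
      rw [expand a b t, hB, sub_self, zero_add, ← hstarBab] at h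
      exact h
    have hsum : Bab + star Bab = 0 := by
      refine aux_key _ p (by rw [IsSelfAdjoint, star_add, star_star, add_comm]) hp fun s => ?_
      have h := hq ((s : ℂ))
      have e1 : star ((s : ℂ)) = (s : ℂ) := by
        rw [Complex.star_def, Complex.conj_ofReal]
      rw [e1] at h
      have e2 : ((s : ℂ)) • Bab = s • Bab := by
        rw [← algebraMap_smul ℂ s Bab]; rfl
      have e3 : ((s : ℂ)) • star Bab = s • star Bab := by
        rw [← algebraMap_smul ℂ s (star Bab)]; rfl
      have e4 : (((s : ℂ)) * (s : ℂ)) • p = (s ^ 2 : ℝ) • p := by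
        rw [← Complex.ofReal_mul,
          show ((s * s : ℝ) : ℂ) • p = (s * s) • p from algebraMap_smul ℂ (s * s) p, ← pow_two]
      rw [e2, e3, e4] at h
      rw [smul_add]
      exact h
    have hIsum : Complex.I • Bab + star (Complex.I • Bab) = 0 := by
      refine aux_key _ p (by rw [IsSelfAdjoint, star_add, star_star, add_comm]) hp fun s => ?_
      have h := hq ((s : ℂ) * Complex.I)
      have e1 : star ((s : ℂ) * Complex.I) = (s : ℂ) * (-Complex.I) := by
        rw [star_mul', Complex.star_def, Complex.conj_I, Complex.conj_ofReal]
      rw [e1] at h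
      have e2 : ((s : ℂ) * Complex.I) • Bab = s • (Complex.I • Bab) := by
        rw [mul_smul, ← algebraMap_smul ℂ s (Complex.I • Bab)]; rfl
      have e3 : ((s : ℂ) * (-Complex.I)) • star Bab = s • star (Complex.I • Bab) := by
        rw [star_smul, Complex.star_def, Complex.conj_I, mul_smul,
          ← algebraMap_smul ℂ s ((-Complex.I) • star Bab)]; rfl
      have e4 : (((s : ℂ) * (-Complex.I)) * ((s : ℂ) * Complex.I)) • p = (s ^ 2 : ℝ) • p := by
        have h5 : ((s : ℂ) * (-Complex.I)) * ((s : ℂ) * Complex.I)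
            = ((s : ℂ) * (s : ℂ)) * -(Complex.I * Complex.I) := by ring
        rw [h5, Complex.I_mul_I, neg_neg, mul_one, ← Complex.ofReal_mul,
          show ((s * s : ℝ) : ℂ) • p = (s * s) • p from algebraMap_smul ℂ (s * s) p, ← pow_two]
      rw [e2, e3, e4] at h
      rw [smul_add]
      exact h
    have hBeq : Bab = star Bab := by
      have e5 : star (Complex.I • Bab) = -(Complex.I • star Bab) := by
        rw [star_smul, Complex.star_def, Complex.conj_I, neg_smul]
      rw [e5, ← sub_eq_add_neg, ← smul_sub] at hIsum
      have := (smul_eq_zero.mp hIsum).resolve_left Complex.I_ne_zero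
      exact sub_eq_zero.mp this
    have : Bab = 0 := by
      rw [← hBeq] at hsum
      have h2s : (2 : ℂ) • Bab = 0 := by rw [two_smul]; exact hsum
      exact (smul_eq_zero.mp h2s).resolve_left two_ne_zero
    rw [hBab] at this
    exact sub_eq_zero.mp this
  -- faithfulness on nonnegative elements
  have hfaith' : ∀ b : A, 0 ≤ b → ν b = 0 → b = 0 := by
    intro b hb hnb
    obtain ⟨c, rfl⟩ := aux_exists_sq hb
    rw [hfaith c hnb]
    simp
  -- generators are fixed by E
  have hEk : ∀ l, E (k l) = k l := by
    intro l
    have h := hfaith _ (h1 l)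
    rw [sub_eq_zero] at h
    exact h.symm
  -- generators are in the multiplicative domain
  have hmulk : ∀ l, E (star (k l) * k l) = star (E (k l)) * E (k l) := by
    intro l
    have h := hfaith' _ (hKS (k l)) (by simpa using h2 l)
    exact sub_eq_zero.mp h
  -- the multiplicative-domain predicate
  set P : A → Prop :=
    fun a => E a = a ∧ (∀ b, E (a * b) = a * E b) ∧ (∀ b, E (b * a) = E b * a) with hP
  have hPk : ∀ l, P (k l) := by
    intro l
    obtain ⟨m, hm⟩ : ∃ m, k m = star (k l) := by
      have : star (k l) ∈ Set.range fun l => star (k l) := ⟨l, rfl⟩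
      rw [hstar] at this
      exact this
    refine ⟨hEk l, fun b => ?_, fun b => ?_⟩
    · have h := hCS (k m) b (hmulk m)
      rw [hm, star_star, hstarE, star_star, hEk l] at h
      exact h
    · have h := hCS (k l) (star b) (hmulk l)
      calc E (b * k l) = star (E (star (b * k l))) := by rw [hstarE, star_star]
        _ = star (E (star (k l) * star b)) := by rw [star_mul]
        _ = star (star (E (k l)) * E (star b)) := by rw [h]
        _ = star (E (star b)) * E (k l) := by rw [star_mul, star_star]
        _ = E b * k l := by rw [hstarE, star_star, hEk l]
  have hPstar : ∀ a, P a → P (star a) := by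
    rintro a ⟨ha1, ha2, ha3⟩
    refine ⟨by rw [hstarE, ha1], fun b => ?_, fun b => ?_⟩
    · calc E (star a * b) = star (E (star (star a * b))) := by rw [hstarE, star_star]
        _ = star (E (star b * a)) := by rw [star_mul, star_star]
        _ = star (E (star b) * a) := by rw [ha3 (star b)]
        _ = star a * star (E (star b)) := star_mul _ _
        _ = star a * E b := by rw [hstarE, star_star]
    · calc E (b * star a) = star (E (star (b * star a))) := by rw [hstarE, star_star]
        _ = star (E (a * star b)) := by rw [star_mul, star_star]
        _ = star (a * E (star b)) := by rw [ha2 (star b)]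
        _ = star (E (star b)) * star a := star_mul _ _
        _ = E b * star a := by rw [hstarE, star_star]
  have hPmul : ∀ a c, P a → P c → P (a * c) := by
    rintro a c ⟨ha1, ha2, ha3⟩ ⟨hc1, hc2, hc3⟩
    refine ⟨by rw [ha2 c, hc1], fun b => ?_, fun b => ?_⟩
    · rw [mul_assoc, ha2 (c * b), hc2 b, mul_assoc]
    · rw [← mul_assoc, hc3 (b * a), ha3 b, mul_assoc]
  have hPadd : ∀ a c, P a → P c → P (a + c) := by
    rintro a c ⟨ha1, ha2, ha3⟩ ⟨hc1, hc2, hc3⟩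
    refine ⟨by rw [map_add, ha1, hc1], fun b => ?_, fun b => ?_⟩
    · rw [add_mul, map_add, ha2 b, hc2 b, add_mul]
    · rw [mul_add, map_add, ha3 b, hc3 b, mul_add]
  have hPalg : ∀ r : ℂ, P (algebraMap ℂ A r) := by
    intro r
    have e1 : ∀ b : A, algebraMap ℂ A r * b = r • b := fun b => (Algebra.smul_def r b).symm
    have e2 : ∀ b : A, b * algebraMap ℂ A r = r • b := fun b => by
      rw [← Algebra.commutes r b]; exact (Algebra.smul_def r b).symm
    refine ⟨?_, fun b => ?_, fun b => ?_⟩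
    · rw [Algebra.algebraMap_eq_smul_one, map_smul, hE1]
    · rw [e1, map_smul, e1]
    · rw [e2, map_smul, e2 (E b)]
  -- E is the identity on the generated star subalgebra
  have hPadj : ∀ a ∈ StarAlgebra.adjoin ℂ (Set.range k), P a := by
    intro a ha
    induction ha using StarAlgebra.adjoin_induction with
    | mem x hx => obtain ⟨l, rfl⟩ := hx; exact hPk l
    | algebraMap r => exact hPalg r
    | add x y hx hy hx' hy' => exact hPadd x y hx' hy'
    | mul x y hx hy hx' hy' => exact hPmul x y hx' hy'
    | star x hx hx' => exact hPstar x hx'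
  -- continuity of E
  have hbound1 : ∀ x : A, IsSelfAdjoint x → ‖E x‖ ≤ (2 + ‖(1 : A)‖) * ‖x‖ := by
    intro x hx
    have hx1 : 0 ≤ x + algebraMap ℝ A ‖x‖ := by
      have := hx.neg_algebraMap_norm_le_self
      rw [neg_le_iff_add_nonneg] at this
      simpa [add_comm] using this
    have hE1' : 0 ≤ E x + algebraMap ℝ A ‖x‖ := by
      have h := hpos _ hx1
      rwa [map_add, hEalg] at h
    have hE2' : E x + algebraMap ℝ A ‖x‖ ≤ algebraMap ℝ A (2 * ‖x‖) := by
      have h := hpos _ (sub_nonneg.mpr hx.le_algebraMap_norm_self)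
      rw [map_sub, hEalg] at h
      have hle : E x ≤ algebraMap ℝ A ‖x‖ := sub_nonneg.mp h
      calc E x + algebraMap ℝ A ‖x‖
          ≤ algebraMap ℝ A ‖x‖ + algebraMap ℝ A ‖x‖ := add_le_add_left hle _
        _ = algebraMap ℝ A (2 * ‖x‖) := by rw [two_mul, map_add]
    have h3 : ‖E x + algebraMap ℝ A ‖x‖‖ ≤ 2 * ‖x‖ :=
      (CStarAlgebra.norm_le_iff_le_algebraMap _ (by positivity) hE1').mpr hE2'
    have h4 : ‖algebraMap ℝ A ‖x‖‖ ≤ ‖x‖ * ‖(1 : A)‖ := by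
      rw [Algebra.algebraMap_eq_smul_one, norm_smul, Real.norm_eq_abs, abs_norm]
    calc ‖E x‖ = ‖(E x + algebraMap ℝ A ‖x‖) - algebraMap ℝ A ‖x‖‖ := by
          rw [add_sub_cancel_right]
      _ ≤ ‖E x + algebraMap ℝ A ‖x‖‖ + ‖algebraMap ℝ A ‖x‖‖ := norm_sub_le _ _
      _ ≤ 2 * ‖x‖ + ‖x‖ * ‖(1 : A)‖ := by linarith
      _ = (2 + ‖(1 : A)‖) * ‖x‖ := by ring
  have hcont : Continuous E := by
    refine AddMonoidHomClass.continuous_of_bound E (2 * (2 + ‖(1 : A)‖)) fun x => ?_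
    have hre : IsSelfAdjoint ((realPart x : A)) := (realPart x).2
    have him : IsSelfAdjoint ((imaginaryPart x : A)) := (imaginaryPart x).2
    have hdec : E x = E (realPart x : A) + Complex.I • E (imaginaryPart x : A) := by
      rw [← map_smul, ← map_add, realPart_add_I_smul_imaginaryPart]
    have hnre : ‖(realPart x : A)‖ ≤ ‖x‖ := by
      rw [realPart_apply_coe]
      calc ‖(2 : ℝ)⁻¹ • (x + star x)‖ = (2 : ℝ)⁻¹ * ‖x + star x‖ := by
            rw [norm_smul, Real.norm_eq_abs, abs_of_nonneg (by norm_num)]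
        _ ≤ (2 : ℝ)⁻¹ * (‖x‖ + ‖star x‖) := by
            gcongr
            exact norm_add_le _ _
        _ = ‖x‖ := by rw [norm_star]; ring
    have hnim : ‖(imaginaryPart x : A)‖ ≤ ‖x‖ := by
      rw [imaginaryPart_apply_coe]
      calc ‖-Complex.I • (2 : ℝ)⁻¹ • (x - star x)‖ = (2 : ℝ)⁻¹ * ‖x - star x‖ := by
            rw [norm_smul, norm_neg, Complex.norm_I, one_mul, norm_smul, Real.norm_eq_abs,
              abs_of_nonneg (by norm_num)]
        _ ≤ (2 : ℝ)⁻¹ * (‖x‖ + ‖star x‖) := by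
            gcongr
            exact norm_sub_le _ _
        _ = ‖x‖ := by rw [norm_star]; ring
    have hc : (0 : ℝ) ≤ 2 + ‖(1 : A)‖ := by positivity
    calc ‖E x‖ ≤ ‖E (realPart x : A)‖ + ‖Complex.I • E (imaginaryPart x : A)‖ := by
          rw [hdec]; exact norm_add_le _ _
      _ = ‖E (realPart x : A)‖ + ‖E (imaginaryPart x : A)‖ := by
          rw [norm_smul, Complex.norm_I, one_mul]
      _ ≤ (2 + ‖(1 : A)‖) * ‖(realPart x : A)‖ + (2 + ‖(1 : A)‖) * ‖(imaginaryPart x : A)‖ :=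
          add_le_add (hbound1 _ hre) (hbound1 _ him)
      _ ≤ (2 + ‖(1 : A)‖) * ‖x‖ + (2 + ‖(1 : A)‖) * ‖x‖ := by
          gcongr
      _ = 2 * (2 + ‖(1 : A)‖) * ‖x‖ := by ring
  -- pass to the closure
  have hid : ∀ a : A, E a = a := by
    intro a
    have hmem : a ∈ closure ((StarAlgebra.adjoin ℂ (Set.range k) : StarSubalgebra ℂ A) : Set A) := by
      have : a ∈ (StarAlgebra.adjoin ℂ (Set.range k)).topologicalClosure := by
        rw [hgen]; trivial
      exact this
    have hcl : IsClosed {x : A | E x = x} := isClosed_eq hcont continuous_id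
    exact closure_minimal (fun x hx => (hPadj x hx).1) hcl hmem
  refine ⟨hid, ?_⟩
  ext a
  rw [← hνE a, hid a]
end

section
/- Let A be a unital C*-algebra, x₁,…,xₙ, k₁,…,kₙ elements of A, and ν a state. Suppose (ω_q) is a sequence of states on A ⊗_max A' converging weak* to ω, all having fixed marginals μ and ν'. Then the associated costs I(ω_q) converge to I(ω) provided the maps a ↦ ω(k ⊗ a') can be approximated: precisely, if for each ε > 0 there exist a'ₗ with ‖kₗΛ_ν - a'ₗ*Λ_ν‖ < ε and q with |ω_q(kₗ ⊗ a'ₗ) - ω(kₗ ⊗ a'ₗ)| < ε for all l, then |I(ω) - lim_q I(ω_q)| ≤ 0, i.e. I is attained at the cluster point. -/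
open scoped ComplexOrder InnerProductSpace
open Filter

/-- the cost is attained at the weak* cluster point of a minimizing
sequence of transport plans. The plans are given via the corresponding u.c.p. maps
`Eq q` and `E` (so that `ω_q(a ⊗ b') = ⟪Λ, π(E_q(a)) b'Λ⟫`), with `Λ` the GNS vector
of `ν` for the representation `π`. If the costs `I(ω_q)` converge to `L` and for every
`ε > 0` there are commutant elements `a'ₗ` with `‖kₗΛ - a'ₗ*Λ‖ < ε` and an index `q`
at which both the pairing against the `a'ₗ` and the cost are `ε`-close, then
`I(ω) = L`. -/
theorem stmt_14 {A : Type*} [CStarAlgebra A]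
    {H : Type*} [NormedAddCommGroup H] [InnerProductSpace ℂ H] [CompleteSpace H]
    (π : A →⋆ₐ[ℂ] (H →L[ℂ] H)) (Λ : H) (hΛ : ‖Λ‖ = 1)
    (μ ν : A →ₗ[ℂ] ℂ) (hμ : IsState μ) (hν : IsState ν)
    (hrep : ∀ a : A, ν a = ⟪Λ, π a Λ⟫_ℂ)
    (n : ℕ) (k : Fin n → A)
    (Eq : ℕ → (A →ₗ[ℂ] A)) (E : A →ₗ[ℂ] A)
    (hEq1 : ∀ q, Eq q 1 = 1) (hE1 : E 1 = 1)
    (hEqν : ∀ q (a : A), ν (Eq q a) = μ a) (hEν : ∀ a : A, ν (E a) = μ a)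
    (Icost : (A →ₗ[ℂ] A) → ℝ)
    (hIcost : ∀ F : A →ₗ[ℂ] A, Icost F =
      ∑ l : Fin n, (μ (star (k l) * k l) + ν (star (k l) * k l)
        - ν (star (F (k l)) * k l) - ν (star (k l) * F (k l))).re)
    (L : ℝ)
    (hlim : Tendsto (fun q => Icost (Eq q)) atTop (nhds L))
    (hbound : ∀ q (l : Fin n), ‖π (Eq q (k l)) Λ - π (E (k l)) Λ‖ ≤ 2 * ‖k l‖)
    (happrox : ∀ ε : ℝ, 0 < ε → ∃ (a' : Fin n → (H →L[ℂ] H)) (q : ℕ),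
      (∀ (l : Fin n) (a : A), (a' l).comp (π a) = (π a).comp (a' l)) ∧
      (∀ l : Fin n, ‖π (k l) Λ - (ContinuousLinearMap.adjoint (a' l)) Λ‖ < ε) ∧
      (∀ l : Fin n,
        ‖⟪Λ, π (Eq q (k l)) ((a' l) Λ)⟫_ℂ - ⟪Λ, π (E (k l)) ((a' l) Λ)⟫_ℂ‖ < ε) ∧
      |Icost (Eq q) - L| < ε) :
    Icost E = L := by
  -- GNS formula for ν on products
  have hν2 : ∀ a b : A, ν (star a * b) = ⟪π a Λ, π b Λ⟫_ℂ := by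
    intro a b
    rw [hrep, map_mul, map_star, ContinuousLinearMap.mul_apply,
      ContinuousLinearMap.star_eq_adjoint, ContinuousLinearMap.adjoint_inner_right]
  set C : ℝ := 4 * (∑ l : Fin n, ‖k l‖) + 2 * n + 1 with hCdef
  have hCpos : 0 < C := by
    have : (0:ℝ) ≤ ∑ l : Fin n, ‖k l‖ := Finset.sum_nonneg fun l _ => norm_nonneg _
    positivity
  have key : ∀ ε : ℝ, 0 < ε → |Icost E - L| ≤ ε * C := by
    intro ε hε
    obtain ⟨a', q, hcomm, h1, h2, h3⟩ := happrox ε hε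
    -- per-term bound
    have hterm : ∀ l : Fin n,
        |(ν (star (Eq q (k l)) * k l)).re + (ν (star (k l) * Eq q (k l))).re
          - (ν (star (E (k l)) * k l)).re - (ν (star (k l) * E (k l))).re|
        ≤ 2 * (ε * (2 * ‖k l‖) + ε) := by
      intro l
      set v := π (Eq q (k l)) Λ - π (E (k l)) Λ with hv
      have hvb : ‖v‖ ≤ 2 * ‖k l‖ := hbound q l
      have hip : ‖⟪π (k l) Λ, v⟫_ℂ‖ ≤ ε * (2 * ‖k l‖) + ε := by
        have hsplit : ⟪π (k l) Λ, v⟫_ℂ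
            = ⟪π (k l) Λ - (ContinuousLinearMap.adjoint (a' l)) Λ, v⟫_ℂ
              + ⟪(ContinuousLinearMap.adjoint (a' l)) Λ, v⟫_ℂ := by
          rw [inner_sub_left]; ring
        have hA : ‖⟪π (k l) Λ - (ContinuousLinearMap.adjoint (a' l)) Λ, v⟫_ℂ‖
            ≤ ε * (2 * ‖k l‖) := by
          calc ‖⟪π (k l) Λ - (ContinuousLinearMap.adjoint (a' l)) Λ, v⟫_ℂ‖
              ≤ ‖π (k l) Λ - (ContinuousLinearMap.adjoint (a' l)) Λ‖ * ‖v‖ :=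
                norm_inner_le_norm _ _
            _ ≤ ε * (2 * ‖k l‖) :=
                mul_le_mul (le_of_lt (h1 l)) hvb (norm_nonneg _) (le_of_lt hε)
        have hB : ‖⟪(ContinuousLinearMap.adjoint (a' l)) Λ, v⟫_ℂ‖ ≤ ε := by
          have hc : ∀ a : A, (a' l) (π a Λ) = π a ((a' l) Λ) := fun a =>
            DFunLike.congr_fun (hcomm l a) Λ
          have : ⟪(ContinuousLinearMap.adjoint (a' l)) Λ, v⟫_ℂ
              = ⟪Λ, π (Eq q (k l)) ((a' l) Λ)⟫_ℂ - ⟪Λ, π (E (k l)) ((a' l) Λ)⟫_ℂ := by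
            rw [ContinuousLinearMap.adjoint_inner_left, hv, map_sub, hc, hc, inner_sub_right]
          rw [this]
          exact le_of_lt (h2 l)
        calc ‖⟪π (k l) Λ, v⟫_ℂ‖
            ≤ ‖⟪π (k l) Λ - (ContinuousLinearMap.adjoint (a' l)) Λ, v⟫_ℂ‖
              + ‖⟪(ContinuousLinearMap.adjoint (a' l)) Λ, v⟫_ℂ‖ := by
              rw [hsplit]; exact norm_add_le _ _
          _ ≤ ε * (2 * ‖k l‖) + ε := add_le_add hA hB
      have hE1' : (ν (star (Eq q (k l)) * k l)).re - (ν (star (E (k l)) * k l)).re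
          = (⟪v, π (k l) Λ⟫_ℂ).re := by
        rw [hν2, hν2, hv, inner_sub_left, Complex.sub_re]
      have hE2' : (ν (star (k l) * Eq q (k l))).re - (ν (star (k l) * E (k l))).re
          = (⟪π (k l) Λ, v⟫_ℂ).re := by
        rw [hν2, hν2, hv, inner_sub_right, Complex.sub_re]
      have hre : (ν (star (Eq q (k l)) * k l)).re + (ν (star (k l) * Eq q (k l))).re
          - (ν (star (E (k l)) * k l)).re - (ν (star (k l) * E (k l))).re
          = (⟪v, π (k l) Λ⟫_ℂ).re + (⟪π (k l) Λ, v⟫_ℂ).re := by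
        rw [← hE1', ← hE2']; ring
      rw [hre]
      have e1 : |(⟪v, π (k l) Λ⟫_ℂ).re| ≤ ε * (2 * ‖k l‖) + ε := by
        calc |(⟪v, π (k l) Λ⟫_ℂ).re| ≤ ‖⟪v, π (k l) Λ⟫_ℂ‖ := Complex.abs_re_le_norm _
          _ = ‖⟪π (k l) Λ, v⟫_ℂ‖ := norm_inner_symm _ _
          _ ≤ ε * (2 * ‖k l‖) + ε := hip
      have e2 : |(⟪π (k l) Λ, v⟫_ℂ).re| ≤ ε * (2 * ‖k l‖) + ε := by
        calc |(⟪π (k l) Λ, v⟫_ℂ).re| ≤ ‖⟪π (k l) Λ, v⟫_ℂ‖ := Complex.abs_re_le_norm _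
          _ ≤ ε * (2 * ‖k l‖) + ε := hip
      calc |(⟪v, π (k l) Λ⟫_ℂ).re + (⟪π (k l) Λ, v⟫_ℂ).re|
          ≤ |(⟪v, π (k l) Λ⟫_ℂ).re| + |(⟪π (k l) Λ, v⟫_ℂ).re| := abs_add_le _ _
        _ ≤ 2 * (ε * (2 * ‖k l‖) + ε) := by linarith
    -- the cost difference
    have hdiff : Icost E - Icost (Eq q)
        = ∑ l : Fin n, ((ν (star (Eq q (k l)) * k l)).re + (ν (star (k l) * Eq q (k l))).re
          - (ν (star (E (k l)) * k l)).re - (ν (star (k l) * E (k l))).re) := by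
      rw [hIcost, hIcost, ← Finset.sum_sub_distrib]
      refine Finset.sum_congr rfl fun l _ => ?_
      simp only [Complex.sub_re, Complex.add_re]
      ring
    have hdb : |Icost E - Icost (Eq q)| ≤ ∑ l : Fin n, 2 * (ε * (2 * ‖k l‖) + ε) := by
      rw [hdiff]
      calc |∑ l : Fin n, ((ν (star (Eq q (k l)) * k l)).re + (ν (star (k l) * Eq q (k l))).re
          - (ν (star (E (k l)) * k l)).re - (ν (star (k l) * E (k l))).re)|
          ≤ ∑ l : Fin n, |(ν (star (Eq q (k l)) * k l)).re + (ν (star (k l) * Eq q (k l))).re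
            - (ν (star (E (k l)) * k l)).re - (ν (star (k l) * E (k l))).re| :=
            Finset.abs_sum_le_sum_abs _ _
        _ ≤ ∑ l : Fin n, 2 * (ε * (2 * ‖k l‖) + ε) :=
            Finset.sum_le_sum fun l _ => hterm l
    have hsum : ∑ l : Fin n, 2 * (ε * (2 * ‖k l‖) + ε)
        = ε * (4 * (∑ l : Fin n, ‖k l‖) + 2 * n) := by
      have h' : ∑ l : Fin n, 2 * (ε * (2 * ‖k l‖) + ε)
          = (∑ l : Fin n, ε * (4 * ‖k l‖)) + ∑ l : Fin n, 2 * ε := by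
        rw [← Finset.sum_add_distrib]
        exact Finset.sum_congr rfl fun l _ => by ring
      rw [h', Finset.sum_const, Finset.card_univ, Fintype.card_fin, nsmul_eq_mul,
        ← Finset.mul_sum, ← Finset.mul_sum]
      ring
    calc |Icost E - L| ≤ |Icost E - Icost (Eq q)| + |Icost (Eq q) - L| := by
          have := abs_sub_abs_le_abs_sub (Icost E - L) (Icost (Eq q) - L)
          have h := abs_add_le (Icost E - Icost (Eq q)) (Icost (Eq q) - L)
          have : Icost E - L = (Icost E - Icost (Eq q)) + (Icost (Eq q) - L) := by ring
          rw [this]; exact abs_add_le _ _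
      _ ≤ ε * (4 * (∑ l : Fin n, ‖k l‖) + 2 * n) + ε := by
          rw [← hsum]; exact add_le_add hdb (le_of_lt h3)
      _ = ε * C := by rw [hCdef]; ring
  have h0 : |Icost E - L| ≤ 0 := by
    by_contra h
    push_neg at h
    have hk := key (|Icost E - L| / (2 * C)) (by positivity)
    have heq : |Icost E - L| / (2 * C) * C = |Icost E - L| / 2 := by
      field_simp
    rw [heq] at hk
    linarith
  have := abs_nonneg (Icost E - L)
  have : |Icost E - L| = 0 := le_antisymm h0 this
  have := abs_eq_zero.mp this
  linarith
end
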